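/- arXiv:1512.05469 — 4 statements merged into one kernel-verified Lean document; each statement's English description precedes it below -/
import Mathlib

section
/- Let m ≥ 2 and let a, b, ã, b̃ ∈ ℝ^m be vectors, each with pairwise distinct entries, such that a and ã agree at every index except possibly a single index k, and likewise b and b̃ agree at every index except possibly the same index k. Then |ρ(a,b) − ρ(ã,b̃)| ≤ 30/m. -/
open Finset

/-- Rank of entry `i` in vector `a`: the number of indices `j` with `a j ≤ a i`. -/
noncomputable def rankOf {m : ℕ} (a : Fin m → ℝ) (i : Fin m) : ℕ :=
  (Finset.univ.filter fun j => a j ≤ a i).card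

/-- Spearman's ρ dependence score. -/
noncomputable def spearmanRho {m : ℕ} (a b : Fin m → ℝ) : ℝ :=
  |1 - 6 * (∑ i, ((rankOf a i : ℝ) - (rankOf b i : ℝ)) ^ 2) / (m * ((m : ℝ) ^ 2 - 1))|

lemma rankOf_le {m : ℕ} (a : Fin m → ℝ) (i : Fin m) : rankOf a i ≤ m := by
  simpa [rankOf] using Finset.card_filter_le Finset.univ (fun j => a j ≤ a i)

lemma one_le_rankOf {m : ℕ} (a : Fin m → ℝ) (i : Fin m) : 1 ≤ rankOf a i := by
  apply Finset.card_pos.2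
  exact ⟨i, by simp⟩

lemma rank_close {m : ℕ} {k : Fin m} {a ta : Fin m → ℝ}
    (h : ∀ i, i ≠ k → a i = ta i) {i : Fin m} (hi : i ≠ k) :
    |(rankOf a i : ℝ) - (rankOf ta i : ℝ)| ≤ 1 := by
  set S := Finset.univ.filter (fun j => a j ≤ a i) with hS
  set T := Finset.univ.filter (fun j => ta j ≤ ta i) with hT
  have hi' : a i = ta i := h i hi
  have hST : S.erase k = T.erase k := by
    ext j
    simp only [Finset.mem_erase, hS, hT, Finset.mem_filter, Finset.mem_univ, true_and]
    constructor
    · rintro ⟨hj, hle⟩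
      exact ⟨hj, by rw [← h j hj, ← hi']; exact hle⟩
    · rintro ⟨hj, hle⟩
      exact ⟨hj, by rw [h j hj, hi']; exact hle⟩
  have h1 : S.card ≤ (S.erase k).card + 1 := by
    have hsub : S ⊆ insert k (S.erase k) :=
      Finset.subset_insert_iff.2 (le_refl _)
    calc S.card ≤ (insert k (S.erase k)).card := Finset.card_le_card hsub
      _ ≤ (S.erase k).card + 1 := Finset.card_insert_le _ _
  have h2 : T.card ≤ (T.erase k).card + 1 := by
    have hsub : T ⊆ insert k (T.erase k) :=
      Finset.subset_insert_iff.2 (le_refl _)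
    calc T.card ≤ (insert k (T.erase k)).card := Finset.card_le_card hsub
      _ ≤ (T.erase k).card + 1 := Finset.card_insert_le _ _
  have h3 : (S.erase k).card ≤ S.card := Finset.card_erase_le
  have h4 : (T.erase k).card ≤ T.card := Finset.card_erase_le
  have hST' : (S.erase k).card = (T.erase k).card := by rw [hST]
  have hSleT : S.card ≤ T.card + 1 := by omega
  have hTleS : T.card ≤ S.card + 1 := by omega
  have hrS : rankOf a i = S.card := rfl
  have hrT : rankOf ta i = T.card := rfl
  rw [hrS, hrT, abs_sub_le_iff]
  constructor
  · have : (S.card : ℝ) ≤ (T.card : ℝ) + 1 := by exact_mod_cast hSleT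
    linarith
  · have : (T.card : ℝ) ≤ (S.card : ℝ) + 1 := by exact_mod_cast hTleS
    linarith

theorem spearman_global_sensitivity {m : ℕ} (hm : 2 ≤ m) (k : Fin m)
    (a b ta tb : Fin m → ℝ)
    (ha : Function.Injective a) (hb : Function.Injective b)
    (hta : Function.Injective ta) (htb : Function.Injective tb)
    (hak : ∀ i, i ≠ k → a i = ta i) (hbk : ∀ i, i ≠ k → b i = tb i) :
    |spearmanRho a b - spearmanRho ta tb| ≤ 30 / m := by
  set M : ℝ := (m : ℝ) with hMdef
  have hM : (2:ℝ) ≤ M := by rw [hMdef]; exact_mod_cast hm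
  have hM0 : 0 < M := by linarith
  have hD : 0 < M * (M ^ 2 - 1) := by nlinarith
  have hr : ∀ (c : Fin m → ℝ) (i : Fin m),
      1 ≤ (rankOf c i : ℝ) ∧ (rankOf c i : ℝ) ≤ M := by
    intro c i
    constructor
    · exact_mod_cast one_le_rankOf c i
    · rw [hMdef]; exact_mod_cast rankOf_le c i
  set d : Fin m → ℝ := fun i => (rankOf a i : ℝ) - (rankOf b i : ℝ) with hddef
  set e : Fin m → ℝ := fun i => (rankOf ta i : ℝ) - (rankOf tb i : ℝ) with hedef
  have hd : ∀ i, |d i| ≤ M - 1 := by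
    intro i
    have h1 := hr a i; have h2 := hr b i
    rw [abs_le]; constructor <;> simp only [hddef] <;> [linarith [h1.1, h2.2]; linarith [h1.2, h2.1]]
  have he : ∀ i, |e i| ≤ M - 1 := by
    intro i
    have h1 := hr ta i; have h2 := hr tb i
    rw [abs_le]; constructor <;> simp only [hedef] <;> [linarith [h1.1, h2.2]; linarith [h1.2, h2.1]]
  have hterm : ∀ i ∈ Finset.univ.erase k, |d i ^ 2 - e i ^ 2| ≤ 4 * (M - 1) := by
    intro i hi
    have hik : i ≠ k := (Finset.mem_erase.1 hi).1
    have hde : |d i - e i| ≤ 2 := by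
      have h1 : |(rankOf a i : ℝ) - (rankOf ta i : ℝ)| ≤ 1 := rank_close hak hik
      have h2 : |(rankOf b i : ℝ) - (rankOf tb i : ℝ)| ≤ 1 := rank_close hbk hik
      have : d i - e i = ((rankOf a i : ℝ) - (rankOf ta i : ℝ)) -
          ((rankOf b i : ℝ) - (rankOf tb i : ℝ)) := by
        simp only [hddef, hedef]; ring
      rw [this]
      calc |((rankOf a i : ℝ) - (rankOf ta i : ℝ)) - ((rankOf b i : ℝ) - (rankOf tb i : ℝ))|
          ≤ |(rankOf a i : ℝ) - (rankOf ta i : ℝ)| + |(rankOf b i : ℝ) - (rankOf tb i : ℝ)| :=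
            abs_sub _ _
        _ ≤ 2 := by linarith
    have hsum : |d i + e i| ≤ 2 * (M - 1) := by
      calc |d i + e i| ≤ |d i| + |e i| := abs_add_le _ _
        _ ≤ 2 * (M - 1) := by linarith [hd i, he i]
    calc |d i ^ 2 - e i ^ 2| = |d i - e i| * |d i + e i| := by
          rw [← abs_mul]; ring_nf
      _ ≤ 2 * (2 * (M - 1)) := by
          apply mul_le_mul hde hsum (abs_nonneg _) (by norm_num)
      _ = 4 * (M - 1) := by ring
  have hk : |d k ^ 2 - e k ^ 2| ≤ (M - 1) ^ 2 := by
    have h1 := abs_le.1 (hd k)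
    have h2 := abs_le.1 (he k)
    have hd2 : d k ^ 2 ≤ (M - 1) ^ 2 := by nlinarith [h1.1, h1.2]
    have he2 : e k ^ 2 ≤ (M - 1) ^ 2 := by nlinarith [h2.1, h2.2]
    have hd0 : 0 ≤ d k ^ 2 := sq_nonneg _
    have he0 : 0 ≤ e k ^ 2 := sq_nonneg _
    rw [abs_le]; constructor <;> linarith
  have hcard : ((Finset.univ.erase k).card : ℝ) = M - 1 := by
    rw [Finset.card_erase_of_mem (Finset.mem_univ k)]
    simp only [Finset.card_univ, Fintype.card_fin]
    have : 1 ≤ m := by omega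
    push_cast [this]
    ring
  have hsum : |(∑ i, d i ^ 2) - (∑ i, e i ^ 2)| ≤ 5 * (M - 1) ^ 2 := by
    rw [← Finset.sum_sub_distrib]
    calc |∑ i, (d i ^ 2 - e i ^ 2)| ≤ ∑ i, |d i ^ 2 - e i ^ 2| :=
          Finset.abs_sum_le_sum_abs _ _
      _ = |d k ^ 2 - e k ^ 2| + ∑ i ∈ Finset.univ.erase k, |d i ^ 2 - e i ^ 2| :=
          (Finset.add_sum_erase _ _ (Finset.mem_univ k)).symm
      _ ≤ (M - 1) ^ 2 + ((Finset.univ.erase k).card : ℝ) * (4 * (M - 1)) := by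
          apply add_le_add hk
          calc ∑ i ∈ Finset.univ.erase k, |d i ^ 2 - e i ^ 2|
              ≤ ∑ _i ∈ Finset.univ.erase k, (4 * (M - 1)) := Finset.sum_le_sum hterm
            _ = ((Finset.univ.erase k).card : ℝ) * (4 * (M - 1)) := by
                rw [Finset.sum_const, nsmul_eq_mul]
      _ ≤ 5 * (M - 1) ^ 2 := by rw [hcard]; nlinarith
  set S1 : ℝ := ∑ i, d i ^ 2 with hS1
  set S2 : ℝ := ∑ i, e i ^ 2 with hS2
  have hρ1 : spearmanRho a b = |1 - 6 * S1 / (M * (M ^ 2 - 1))| := rfl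
  have hρ2 : spearmanRho ta tb = |1 - 6 * S2 / (M * (M ^ 2 - 1))| := rfl
  rw [hρ1, hρ2]
  calc |(|1 - 6 * S1 / (M * (M ^ 2 - 1))|) - (|1 - 6 * S2 / (M * (M ^ 2 - 1))|)|
      ≤ |(1 - 6 * S1 / (M * (M ^ 2 - 1))) - (1 - 6 * S2 / (M * (M ^ 2 - 1)))| :=
        abs_abs_sub_abs_le_abs_sub _ _
    _ = 6 * |S1 - S2| / (M * (M ^ 2 - 1)) := by
        have heq : (1 - 6 * S1 / (M * (M ^ 2 - 1))) - (1 - 6 * S2 / (M * (M ^ 2 - 1)))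
            = 6 * (S2 - S1) / (M * (M ^ 2 - 1)) := by ring
        rw [heq, abs_div, abs_of_pos hD, abs_mul, abs_sub_comm S2 S1]
        norm_num
    _ ≤ 30 / M := by
        rw [div_le_div_iff₀ hD hM0]
        have h5 : |S1 - S2| ≤ 5 * (M - 1) ^ 2 := hsum
        nlinarith [abs_nonneg (S1 - S2)]
end

section
/- Let m ≥ 2 and let a, b, ã, b̃ ∈ ℝ^m be vectors, each with pairwise distinct entries, such that a and ã agree at every index except possibly a single index k, and likewise b and b̃ agree at every index except possibly the same index k. Then |τ(a,b) − τ(ã,b̃)| ≤ 4/m. -/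
open Finset

/-- The set of concordant pairs `(i, j)` with `i < j`. -/
noncomputable def concordantPairs {m : ℕ} (a b : Fin m → ℝ) : Finset (Fin m × Fin m) :=
  Finset.univ.filter fun p => p.1 < p.2 ∧ (a p.1 - a p.2) * (b p.1 - b p.2) > 0

/-- The set of discordant pairs `(i, j)` with `i < j` (those not concordant). -/
noncomputable def discordantPairs {m : ℕ} (a b : Fin m → ℝ) : Finset (Fin m × Fin m) :=
  Finset.univ.filter fun p => p.1 < p.2 ∧ ¬((a p.1 - a p.2) * (b p.1 - b p.2) > 0)

/-- Kendall's τ dependence score. -/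
noncomputable def kendallTau {m : ℕ} (a b : Fin m → ℝ) : ℝ :=
  |((concordantPairs a b).card : ℝ) - ((discordantPairs a b).card : ℝ)| /
    ((m : ℝ) * ((m : ℝ) - 1) / 2)

open Classical in
/-- The pairs `i < j` touching index `k` number at most `m - 1`. -/
lemma pairsAtK_card_le {m : ℕ} (hm : 1 ≤ m) (k : Fin m) :
    ((univ : Finset (Fin m × Fin m)).filter
      (fun p => p.1 < p.2 ∧ (p.1 = k ∨ p.2 = k))).card ≤ m - 1 := by
  classical
  have h := Finset.card_le_card_of_injOn
    (f := fun p : Fin m × Fin m => if p.1 = k then p.2 else p.1)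
    (s := (univ : Finset (Fin m × Fin m)).filter
      (fun p => p.1 < p.2 ∧ (p.1 = k ∨ p.2 = k)))
    (t := (univ : Finset (Fin m)).erase k)
    (by
      intro p hp
      simp only [mem_coe, mem_filter, mem_univ, true_and] at hp
      obtain ⟨hlt, hk⟩ := hp
      simp only [mem_coe, mem_erase, mem_univ, and_true]
      split_ifs with h1
      · exact fun h2 => absurd (h2 ▸ h1 ▸ hlt) (lt_irrefl _)
      · exact h1)
    (by
      intro p hp q hq hpq
      simp only [coe_filter, Set.mem_setOf_eq, mem_univ, true_and] at hp hq
      obtain ⟨hp1, hp2⟩ := hp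
      obtain ⟨hq1, hq2⟩ := hq
      dsimp only at hpq
      split_ifs at hpq with h1 h2 h2
      · exact Prod.ext (h1.trans h2.symm) hpq
      · rcases hq2 with h | h
        · exact absurd h h2
        · exact absurd (hpq ▸ h1 ▸ hp1) (not_lt.mpr (h ▸ hq1).le)
      · rcases hp2 with h | h
        · exact absurd h h1
        · exact absurd (hpq ▸ h2 ▸ hq1) (not_lt.mpr (h ▸ hp1).le)
      · rcases hp2 with h | h
        · exact absurd h h1
        · rcases hq2 with h' | h'
          · exact absurd h' h2
          · exact Prod.ext hpq (h.trans h'.symm))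
  calc _ ≤ _ := h
  _ = m - 1 := by simp [Finset.card_erase_of_mem]

theorem kendall_global_sensitivity {m : ℕ} (hm : 2 ≤ m) (k : Fin m)
    (a b ta tb : Fin m → ℝ)
    (ha : Function.Injective a) (hb : Function.Injective b)
    (hta : Function.Injective ta) (htb : Function.Injective tb)
    (hak : ∀ i, i ≠ k → a i = ta i) (hbk : ∀ i, i ≠ k → b i = tb i) :
    |kendallTau a b - kendallTau ta tb| ≤ 4 / m := by
  classical
  have hmR : (2:ℝ) ≤ (m:ℝ) := by exact_mod_cast hm
  set P : Fin m × Fin m → Prop := fun p => p.1 = k ∨ p.2 = k with hP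
  -- split concordant / discordant into parts touching k and not
  have split : ∀ (u v : Fin m → ℝ),
      ((concordantPairs u v).card : ℝ) - ((discordantPairs u v).card : ℝ) =
      (((concordantPairs u v).filter P).card : ℝ) - (((discordantPairs u v).filter P).card : ℝ)
      + ((((concordantPairs u v).filter (fun p => ¬ P p)).card : ℝ)
        - (((discordantPairs u v).filter (fun p => ¬ P p)).card : ℝ)) := by
    intro u v
    have h1 := Finset.card_filter_add_card_filter_not (s := concordantPairs u v) (p := P)
    have h2 := Finset.card_filter_add_card_filter_not (s := discordantPairs u v) (p := P)
    push_cast [← h1, ← h2]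
    ring
  -- off-k parts coincide
  have hoff : ∀ (u v : Fin m → ℝ), (∀ i, i ≠ k → u i = ta i) → (∀ i, i ≠ k → v i = tb i) →
      (concordantPairs u v).filter (fun p => ¬ P p) = (concordantPairs ta tb).filter (fun p => ¬ P p)
      ∧ (discordantPairs u v).filter (fun p => ¬ P p) = (discordantPairs ta tb).filter (fun p => ¬ P p) := by
    intro u v hu hv
    constructor <;>
    · ext p
      simp only [concordantPairs, discordantPairs, mem_filter, mem_univ, true_and, hP,
        not_or, and_congr_left_iff]
      rintro ⟨h1, h2⟩
      rw [hu _ h1, hu _ h2, hv _ h1, hv _ h2]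
  obtain ⟨hc, hd⟩ := hoff a b hak hbk
  -- bound on parts touching k
  have hKbound : ∀ (u v : Fin m → ℝ),
      (((concordantPairs u v).filter P).card : ℝ) + (((discordantPairs u v).filter P).card : ℝ)
        ≤ (m:ℝ) - 1 := by
    intro u v
    have e1 : (concordantPairs u v).filter P
        = ((univ : Finset (Fin m × Fin m)).filter (fun p => p.1 < p.2 ∧ P p)).filter
            (fun p => (u p.1 - u p.2) * (v p.1 - v p.2) > 0) := by
      simp only [concordantPairs, Finset.filter_filter]
      apply Finset.filter_congr
      intro p _
      tauto
    have e2 : (discordantPairs u v).filter P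
        = ((univ : Finset (Fin m × Fin m)).filter (fun p => p.1 < p.2 ∧ P p)).filter
            (fun p => ¬ ((u p.1 - u p.2) * (v p.1 - v p.2) > 0)) := by
      simp only [discordantPairs, Finset.filter_filter]
      apply Finset.filter_congr
      intro p _
      tauto
    have hsum : ((concordantPairs u v).filter P).card + ((discordantPairs u v).filter P).card
        = ((univ : Finset (Fin m × Fin m)).filter (fun p => p.1 < p.2 ∧ P p)).card := by
      rw [e1, e2]
      exact Finset.card_filter_add_card_filter_not _
    have hle := pairsAtK_card_le (le_trans one_le_two hm) k
    have : ((concordantPairs u v).filter P).card + ((discordantPairs u v).filter P).card ≤ m - 1 := by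
      rw [hsum]
      convert hle using 2
    have hcast : ((m - 1 : ℕ) : ℝ) = (m:ℝ) - 1 := by
      have : 1 ≤ m := le_trans one_le_two hm
      push_cast [this]
      ring
    calc (((concordantPairs u v).filter P).card : ℝ) + (((discordantPairs u v).filter P).card : ℝ)
        = ((((concordantPairs u v).filter P).card + ((discordantPairs u v).filter P).card : ℕ) : ℝ) := by push_cast; ring
      _ ≤ ((m - 1 : ℕ) : ℝ) := by exact_mod_cast this
      _ = (m:ℝ) - 1 := hcast
  -- numerators
  set C : ℝ := ((concordantPairs a b).card : ℝ)
  set D : ℝ := ((discordantPairs a b).card : ℝ)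
  set C' : ℝ := ((concordantPairs ta tb).card : ℝ)
  set D' : ℝ := ((discordantPairs ta tb).card : ℝ)
  have hnum : |(C - D) - (C' - D')| ≤ 2 * ((m:ℝ) - 1) := by
    have h1 := split a b
    have h2 := split ta tb
    rw [hc, hd] at h1
    have hKa := hKbound a b
    have hKt := hKbound ta tb
    have hnn : ∀ s : Finset (Fin m × Fin m), (0:ℝ) ≤ (s.card : ℝ) := fun s => Nat.cast_nonneg _
    have := hnn ((concordantPairs a b).filter P)
    have := hnn ((discordantPairs a b).filter P)
    have := hnn ((concordantPairs ta tb).filter P)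
    have := hnn ((discordantPairs ta tb).filter P)
    rw [abs_le]
    constructor <;> [skip; skip] <;> nlinarith [h1, h2]
  -- denominator
  have hNpos : (0:ℝ) < (m:ℝ) * ((m:ℝ) - 1) / 2 := by nlinarith
  have key : kendallTau a b - kendallTau ta tb = (|C - D| - |C' - D'|) / ((m:ℝ) * ((m:ℝ) - 1) / 2) := by
    unfold kendallTau
    rw [div_sub_div_same]
  rw [key, abs_div, abs_of_pos hNpos]
  rw [div_le_div_iff₀ hNpos (by positivity : (0:ℝ) < (m:ℝ))]
  -- goal: ||C-D| - |C'-D'|| * m ≤ 4 * (m*(m-1)/2)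
  have habs := le_trans (abs_abs_sub_abs_le_abs_sub (C - D) (C' - D')) hnum
  have hm0 : (0:ℝ) < (m:ℝ) := by linarith
  nlinarith [abs_nonneg (|C - D| - |C' - D'|)]
end

section
/- Let m ≥ 2 and let K, L, K̃, L̃ be m×m real matrices with all entries in [0,1] such that K and K̃ agree on every entry (i,j) with i ≠ k and j ≠ k for some fixed index k, and likewise L and L̃ agree on every entry (i,j) with i ≠ k and j ≠ k. Then |trace(KHLH)/(m−1)² − trace(K̃HL̃H)/(m−1)²| ≤ (16m − 8)/(m−1)². -/
open Matrix

/-- The `m × m` centering matrix `H = I - (1/m) J`, where `J` is the all-ones matrix. -/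
noncomputable def centering (m : ℕ) : Matrix (Fin m) (Fin m) ℝ :=
  1 - (m : ℝ)⁻¹ • Matrix.of (fun _ _ => (1 : ℝ))

/-- The empirical HSIC score `trace(K H L H) / (m - 1)²`. -/
noncomputable def hsicScore {m : ℕ} (K L : Matrix (Fin m) (Fin m) ℝ) : ℝ :=
  (K * centering m * L * centering m).trace / ((m : ℝ) - 1) ^ 2

lemma mulH_apply {m : ℕ} (A : Matrix (Fin m) (Fin m) ℝ) (i j : Fin m) :
    (A * centering m) i j = A i j - (m:ℝ)⁻¹ * ∑ q, A i q := by
  rw [centering, mul_sub, mul_one, Matrix.mul_smul]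
  simp [Matrix.sub_apply, Matrix.smul_apply, Matrix.mul_apply]

lemma Hmul_apply {m : ℕ} (A : Matrix (Fin m) (Fin m) ℝ) (i j : Fin m) :
    (centering m * A) i j = A i j - (m:ℝ)⁻¹ * ∑ p, A p j := by
  rw [centering, sub_mul, one_mul, Matrix.smul_mul]
  simp [Matrix.sub_apply, Matrix.smul_apply, Matrix.mul_apply]

lemma mulH_bound {m : ℕ} (A : Matrix (Fin m) (Fin m) ℝ) (C : ℝ)
    (hA : ∀ i j, |A i j| ≤ C) (i j : Fin m) : |(A * centering m) i j| ≤ 2 * C := by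
  have hm : 0 < m := i.pos
  have hC : 0 ≤ C := (abs_nonneg _).trans (hA i j)
  rw [mulH_apply]
  have h1 : |∑ q, A i q| ≤ (m : ℝ) * C := by
    calc |∑ q, A i q| ≤ ∑ q, |A i q| := Finset.abs_sum_le_sum_abs _ _
    _ ≤ ∑ _q : Fin m, C := Finset.sum_le_sum (fun q _ => hA i q)
    _ = (m : ℝ) * C := by simp [mul_comm]
  have h2 : |(m:ℝ)⁻¹ * ∑ q, A i q| ≤ C := by
    rw [abs_mul, abs_inv, Nat.abs_cast]
    have hmp : (0:ℝ) < m := by exact_mod_cast hm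
    rw [inv_mul_le_iff₀ hmp]
    linarith
  calc |A i j - (m:ℝ)⁻¹ * ∑ q, A i q| ≤ |A i j| + |(m:ℝ)⁻¹ * ∑ q, A i q| := abs_sub _ _
  _ ≤ C + C := add_le_add (hA i j) h2
  _ = 2 * C := by ring

lemma Hmul_bound {m : ℕ} (A : Matrix (Fin m) (Fin m) ℝ) (C : ℝ)
    (hA : ∀ i j, |A i j| ≤ C) (i j : Fin m) : |(centering m * A) i j| ≤ 2 * C := by
  have hm : 0 < m := i.pos
  have hC : 0 ≤ C := (abs_nonneg _).trans (hA i j)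
  rw [Hmul_apply]
  have h1 : |∑ p, A p j| ≤ (m : ℝ) * C := by
    calc |∑ p, A p j| ≤ ∑ p, |A p j| := Finset.abs_sum_le_sum_abs _ _
    _ ≤ ∑ _p : Fin m, C := Finset.sum_le_sum (fun p _ => hA p j)
    _ = (m : ℝ) * C := by simp [mul_comm]
  have h2 : |(m:ℝ)⁻¹ * ∑ p, A p j| ≤ C := by
    rw [abs_mul, abs_inv, Nat.abs_cast]
    have hmp : (0:ℝ) < m := by exact_mod_cast hm
    rw [inv_mul_le_iff₀ hmp]
    linarith
  calc |A i j - (m:ℝ)⁻¹ * ∑ p, A p j| ≤ |A i j| + |(m:ℝ)⁻¹ * ∑ p, A p j| := abs_sub _ _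
  _ ≤ C + C := add_le_add (hA i j) h2
  _ = 2 * C := by ring

lemma conj_bound {m : ℕ} (A : Matrix (Fin m) (Fin m) ℝ)
    (hA : ∀ i j, |A i j| ≤ 1) (i j : Fin m) :
    |(centering m * A * centering m) i j| ≤ 4 := by
  have h1 : ∀ i j, |(centering m * A) i j| ≤ 2 * 1 := Hmul_bound A 1 hA
  have h2 := mulH_bound (centering m * A) (2 * 1) h1 i j
  linarith

lemma trace_mul_sum {m : ℕ} (A B : Matrix (Fin m) (Fin m) ℝ) :
    (A * B).trace = ∑ i, ∑ j, A i j * B j i := by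
  simp [Matrix.trace, Matrix.diag, Matrix.mul_apply]

lemma sparse_bound {m : ℕ} (D M : Matrix (Fin m) (Fin m) ℝ) (k : Fin m)
    (hD : ∀ i j, |D i j| ≤ 1) (hD0 : ∀ i j, i ≠ k → j ≠ k → D i j = 0)
    (hM : ∀ i j, |M i j| ≤ 4) :
    |(D * M).trace| ≤ 8 * (m : ℝ) - 4 := by
  rw [trace_mul_sum]
  have hterm : ∀ i j : Fin m, |D i j * M j i| ≤ if i = k ∨ j = k then 4 else 0 := by
    intro i j
    by_cases h : i = k ∨ j = k
    · simp only [h, if_true]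
      rw [abs_mul]
      calc |D i j| * |M j i| ≤ 1 * 4 :=
        mul_le_mul (hD i j) (hM j i) (abs_nonneg _) zero_le_one
      _ = 4 := by ring
    · push_neg at h
      simp [hD0 i j h.1 h.2, h.1, h.2]
  calc |∑ i, ∑ j, D i j * M j i| ≤ ∑ i, ∑ j, |D i j * M j i| := by
        refine (Finset.abs_sum_le_sum_abs _ _).trans ?_
        exact Finset.sum_le_sum (fun i _ => Finset.abs_sum_le_sum_abs _ _)
  _ ≤ ∑ i, ∑ j : Fin m, (if i = k ∨ j = k then (4:ℝ) else 0) :=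
        Finset.sum_le_sum (fun i _ => Finset.sum_le_sum (fun j _ => hterm i j))
  _ = 8 * (m : ℝ) - 4 := by
        have hrow : ∀ i : Fin m, (∑ j : Fin m, (if i = k ∨ j = k then (4:ℝ) else 0))
            = if i = k then 4 * (m:ℝ) else 4 := by
          intro i
          by_cases hi : i = k
          · simp [hi, mul_comm]
          · simp [hi, Finset.sum_ite_eq']
        rw [Finset.sum_congr rfl (fun i _ => hrow i)]
        have : ∀ i : Fin m, (if i = k then 4 * (m:ℝ) else 4)
            = (if i = k then 4 * (m:ℝ) - 4 else 0) + 4 := by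
          intro i; by_cases hi : i = k <;> simp [hi]
        rw [Finset.sum_congr rfl (fun i _ => this i), Finset.sum_add_distrib]
        have hm : 0 < m := k.pos
        simp [Finset.sum_ite_eq', mul_comm]
        ring

theorem hsic_test_sensitivity {m : ℕ} (hm : 2 ≤ m) (k : Fin m)
    (K L tK tL : Matrix (Fin m) (Fin m) ℝ)
    (hK : ∀ i j, K i j ∈ Set.Icc (0 : ℝ) 1) (hL : ∀ i j, L i j ∈ Set.Icc (0 : ℝ) 1)
    (htK : ∀ i j, tK i j ∈ Set.Icc (0 : ℝ) 1) (htL : ∀ i j, tL i j ∈ Set.Icc (0 : ℝ) 1)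
    (hKk : ∀ i j, i ≠ k → j ≠ k → K i j = tK i j)
    (hLk : ∀ i j, i ≠ k → j ≠ k → L i j = tL i j) :
    |hsicScore K L - hsicScore tK tL| ≤ (16 * (m : ℝ) - 8) / ((m : ℝ) - 1) ^ 2 := by
  set H := centering m with hH
  have habs1 : ∀ (A : Matrix (Fin m) (Fin m) ℝ),
      (∀ i j, A i j ∈ Set.Icc (0:ℝ) 1) → ∀ i j, |A i j| ≤ 1 := by
    intro A hA i j
    rw [abs_le]
    exact ⟨by linarith [(hA i j).1], (hA i j).2⟩
  -- key decomposition
  have key : (K * H * L * H).trace - (tK * H * tL * H).trace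
      = ((K - tK) * (H * L * H)).trace + ((L - tL) * (H * tK * H)).trace := by
    have c2 : ((L - tL) * (H * tK * H)).trace = (tK * H * (L - tL) * H).trace := by
      rw [Matrix.trace_mul_cycle (tK * H) (L - tL) H,
        Matrix.trace_mul_cycle H (tK * H) (L - tL)]
      simp only [mul_assoc]
    rw [c2]
    simp only [sub_mul, mul_sub, Matrix.trace_sub, mul_assoc]
    ring
  -- bound first term
  have hD1 : ∀ i j, |(K - tK) i j| ≤ 1 := by
    intro i j
    rw [Matrix.sub_apply, abs_sub_le_iff]
    constructor
    · linarith [(hK i j).2, (htK i j).1]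
    · linarith [(hK i j).1, (htK i j).2]
  have hD1z : ∀ i j, i ≠ k → j ≠ k → (K - tK) i j = 0 := by
    intro i j hi hj; simp [Matrix.sub_apply, hKk i j hi hj]
  have hM1 : ∀ i j, |(H * L * H) i j| ≤ 4 := by
    intro i j; rw [hH]
    exact conj_bound L (habs1 L hL) i j
  have hb1 : |((K - tK) * (H * L * H)).trace| ≤ 8 * (m:ℝ) - 4 :=
    sparse_bound _ _ k hD1 hD1z hM1
  -- bound second term
  have hD2 : ∀ i j, |(L - tL) i j| ≤ 1 := by
    intro i j
    rw [Matrix.sub_apply, abs_sub_le_iff]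
    constructor
    · linarith [(hL i j).2, (htL i j).1]
    · linarith [(hL i j).1, (htL i j).2]
  have hD2z : ∀ i j, i ≠ k → j ≠ k → (L - tL) i j = 0 := by
    intro i j hi hj; simp [Matrix.sub_apply, hLk i j hi hj]
  have hM2 : ∀ i j, |(H * tK * H) i j| ≤ 4 := by
    intro i j; rw [hH]
    exact conj_bound tK (habs1 tK htK) i j
  have hb2 : |((L - tL) * (H * tK * H)).trace| ≤ 8 * (m:ℝ) - 4 :=
    sparse_bound _ _ k hD2 hD2z hM2
  -- combine
  have hnum : |(K * H * L * H).trace - (tK * H * tL * H).trace| ≤ 16 * (m:ℝ) - 8 := by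
    rw [key]
    calc |((K - tK) * (H * L * H)).trace + ((L - tL) * (H * tK * H)).trace|
        ≤ |((K - tK) * (H * L * H)).trace| + |((L - tL) * (H * tK * H)).trace| := abs_add_le _ _
    _ ≤ (8 * (m:ℝ) - 4) + (8 * (m:ℝ) - 4) := add_le_add hb1 hb2
    _ = 16 * (m:ℝ) - 8 := by ring
  have hmr : (2:ℝ) ≤ (m:ℝ) := by exact_mod_cast hm
  have hd0 : (0:ℝ) < (m:ℝ) - 1 := by linarith
  have hd : (0:ℝ) < ((m:ℝ) - 1) ^ 2 := by positivity
  rw [hsicScore, hsicScore, div_sub_div_same, abs_div, abs_of_pos hd]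
  gcongr
end

section
/- Let m ≥ 2 and let K, L, K̃, L̃ be m×m real matrices with all entries in [0,1] such that K and K̃ agree on every entry (i,j) with i ≠ k and j ≠ k for some fixed index k, and likewise L and L̃ agree on every entry (i,j) with i ≠ k and j ≠ k. Then |trace(KHLH)/(m−1)² − trace(K̃HL̃H)/(m−1)²| ≤ (12m − 11)/(m−1)². -/
open Matrix

lemma mul_centering_apply {m : ℕ} (A : Matrix (Fin m) (Fin m) ℝ) (i j : Fin m) :
    (A * centering m) i j = A i j - (m : ℝ)⁻¹ * ∑ q, A i q := by
  simp only [centering, Matrix.mul_sub, Matrix.mul_one, Matrix.sub_apply]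
  congr 1
  simp [Matrix.mul_apply, Finset.sum_mul, mul_comm]

lemma centering_mul_apply {m : ℕ} (A : Matrix (Fin m) (Fin m) ℝ) (i j : Fin m) :
    (centering m * A) i j = A i j - (m : ℝ)⁻¹ * ∑ p, A p j := by
  simp only [centering, Matrix.sub_mul, Matrix.one_mul, Matrix.sub_apply]
  congr 1
  simp [Matrix.mul_apply, Finset.mul_sum, mul_comm]

lemma inv_sum_mem {m : ℕ} (hm : 0 < m) (f : Fin m → ℝ)
    (hf : ∀ p, f p ∈ Set.Icc (0 : ℝ) 1) : (m : ℝ)⁻¹ * ∑ p, f p ∈ Set.Icc (0 : ℝ) 1 := by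
  have hm' : (0 : ℝ) < m := by exact_mod_cast hm
  constructor
  · exact mul_nonneg (by positivity) (Finset.sum_nonneg fun p _ => (hf p).1)
  · have hs : ∑ p, f p ≤ (m : ℝ) := by
      calc ∑ p, f p ≤ ∑ _p : Fin m, (1 : ℝ) := Finset.sum_le_sum fun p _ => (hf p).2
        _ = (m : ℝ) := by simp
    calc (m : ℝ)⁻¹ * ∑ p, f p ≤ (m : ℝ)⁻¹ * (m : ℝ) := by
          exact mul_le_mul_of_nonneg_left hs (by positivity)
      _ = 1 := inv_mul_cancel₀ (ne_of_gt hm')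

lemma entry_bound {m : ℕ} (hm : 0 < m) (L : Matrix (Fin m) (Fin m) ℝ)
    (hL : ∀ i j, L i j ∈ Set.Icc (0 : ℝ) 1) (i j : Fin m) :
    |(centering m * L * centering m) i j| ≤ 2 := by
  set c : ℝ := (m : ℝ)⁻¹ with hc
  have key : (centering m * L * centering m) i j
      = (L i j - c * ∑ p, L p j) - (c * ∑ q, L i q - c * ∑ q, c * ∑ p, L p q) := by
    rw [mul_centering_apply, centering_mul_apply]
    have : ∀ q, (centering m * L) i q = L i q - c * ∑ p, L p q :=
      fun q => centering_mul_apply L i q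
    rw [Finset.sum_congr rfl fun q _ => this q, Finset.sum_sub_distrib]
    ring
  have h1 := hL i j
  have h2 := inv_sum_mem hm (fun p => L p j) (fun p => hL p j)
  have h3 := inv_sum_mem hm (fun q => L i q) (fun q => hL i q)
  have h4 := inv_sum_mem hm (fun q => c * ∑ p, L p q)
    (fun q => inv_sum_mem hm (fun p => L p q) (fun p => hL p q))
  rw [key, abs_sub_le_iff]
  obtain ⟨a1, b1⟩ := h1
  obtain ⟨a2, b2⟩ := h2
  obtain ⟨a3, b3⟩ := h3
  obtain ⟨a4, b4⟩ := h4
  constructor <;> simp only [Set.mem_Icc] at * <;> nlinarith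

lemma trace_sparse {m : ℕ} (k : Fin m) (D M : Matrix (Fin m) (Fin m) ℝ)
    (hD0 : ∀ i j, i ≠ k → j ≠ k → D i j = 0) (hD1 : ∀ i j, |D i j| ≤ 1)
    (hM : ∀ i j, |M i j| ≤ 2) :
    |(D * M).trace| ≤ 4 * m - 2 := by
  have hm1 : 1 ≤ m := Nat.pos_of_ne_zero (fun h => by subst h; exact k.elim0)
  have htr : (D * M).trace = ∑ i, ∑ j, D i j * M j i := by
    simp [Matrix.trace, Matrix.diag, Matrix.mul_apply]
  rw [htr]
  have h1 : |∑ i, ∑ j, D i j * M j i| ≤ ∑ i, ∑ j, |D i j * M j i| :=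
    (Finset.abs_sum_le_sum_abs _ _).trans
      (Finset.sum_le_sum fun i _ => Finset.abs_sum_le_sum_abs _ _)
  have h2 : ∀ i j : Fin m, |D i j * M j i| ≤ (if i = k ∨ j = k then (2 : ℝ) else 0) := by
    intro i j
    by_cases hik : i = k ∨ j = k
    · rw [if_pos hik, abs_mul]
      calc |D i j| * |M j i| ≤ 1 * 2 :=
            mul_le_mul (hD1 i j) (hM j i) (abs_nonneg _) one_pos.le
        _ = 2 := one_mul 2
    · push_neg at hik
      rw [if_neg (by push_neg; exact hik), hD0 i j hik.1 hik.2]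
      simp
  have h3 : ∑ i, ∑ j, |D i j * M j i|
      ≤ ∑ i, ∑ j, (if i = k ∨ j = k then (2 : ℝ) else 0) :=
    Finset.sum_le_sum fun i _ => Finset.sum_le_sum fun j _ => h2 i j
  have h4 : ∑ i, ∑ j, (if i = k ∨ j = k then (2 : ℝ) else 0) = 4 * m - 2 := by
    rw [Fintype.sum_eq_add_sum_compl k]
    have hk : ∑ j : Fin m, (if k = k ∨ j = k then (2 : ℝ) else 0) = 2 * m := by
      simp [Finset.sum_ite_eq']
      ring
    have hnk : ∀ i ∈ ({k}ᶜ : Finset (Fin m)),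
        ∑ j : Fin m, (if i = k ∨ j = k then (2 : ℝ) else 0) = 2 := by
      intro i hi
      have : i ≠ k := by simpa using hi
      simp [this, Finset.sum_ite_eq']
    rw [hk, Finset.sum_congr rfl hnk, Finset.sum_const, Finset.card_compl]
    simp only [Finset.card_singleton, Fintype.card_fin, nsmul_eq_mul]
    have : ((m - 1 : ℕ) : ℝ) = (m : ℝ) - 1 := by
      rw [Nat.cast_sub hm1]; simp
    rw [this]; ring
  linarith [h1.trans (h3.trans_eq h4)]

theorem hsic_test_sensitivity_improved {m : ℕ} (hm : 2 ≤ m) (k : Fin m)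
    (K L tK tL : Matrix (Fin m) (Fin m) ℝ)
    (hK : ∀ i j, K i j ∈ Set.Icc (0 : ℝ) 1) (hL : ∀ i j, L i j ∈ Set.Icc (0 : ℝ) 1)
    (htK : ∀ i j, tK i j ∈ Set.Icc (0 : ℝ) 1) (htL : ∀ i j, tL i j ∈ Set.Icc (0 : ℝ) 1)
    (hKk : ∀ i j, i ≠ k → j ≠ k → K i j = tK i j)
    (hLk : ∀ i j, i ≠ k → j ≠ k → L i j = tL i j) :
    |hsicScore K L - hsicScore tK tL| ≤ (12 * (m : ℝ) - 11) / ((m : ℝ) - 1) ^ 2 := by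
  have hm0 : 0 < m := lt_of_lt_of_le two_pos hm
  have hm2 : (2 : ℝ) ≤ (m : ℝ) := by exact_mod_cast hm
  have hpos : (0 : ℝ) < ((m : ℝ) - 1) ^ 2 := by nlinarith
  set H := centering m
  -- difference bounds helpers
  have habs1 : ∀ (A B : Matrix (Fin m) (Fin m) ℝ),
      (∀ i j, A i j ∈ Set.Icc (0:ℝ) 1) → (∀ i j, B i j ∈ Set.Icc (0:ℝ) 1) →
      ∀ i j, |(A - B) i j| ≤ 1 := by
    intro A B hA hB i j
    obtain ⟨a1, a2⟩ := hA i j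
    obtain ⟨b1, b2⟩ := hB i j
    rw [Matrix.sub_apply, abs_le]
    constructor <;> linarith
  -- term 1
  have t1 : |((K - tK) * (H * L * H)).trace| ≤ 4 * m - 2 := by
    refine trace_sparse k _ _ ?_ (habs1 K tK hK htK) ?_
    · intro i j hi hj
      rw [Matrix.sub_apply, hKk i j hi hj, sub_self]
    · intro i j
      have := entry_bound hm0 L hL i j
      simpa [H, Matrix.mul_assoc] using this
  -- term 2
  have t2 : |((L - tL) * (H * tK * H)).trace| ≤ 4 * m - 2 := by
    refine trace_sparse k _ _ ?_ (habs1 L tL hL htL) ?_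
    · intro i j hi hj
      rw [Matrix.sub_apply, hLk i j hi hj, sub_self]
    · intro i j
      have := entry_bound hm0 tK htK i j
      simpa [H, Matrix.mul_assoc] using this
  have decomp : (K * H * L * H).trace - (tK * H * tL * H).trace
      = ((K - tK) * (H * L * H)).trace + ((L - tL) * (H * tK * H)).trace := by
    have e1 : K * H * L * H - tK * H * tL * H
        = (K - tK) * (H * L * H) + (tK * H * (L - tL)) * H := by
      noncomm_ring
    have e2 : ((tK * H * (L - tL)) * H).trace = ((L - tL) * (H * tK * H)).trace := by
      rw [Matrix.trace_mul_comm]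
      rw [show H * (tK * H * (L - tL)) = (H * tK * H) * (L - tL) by noncomm_ring]
      rw [Matrix.trace_mul_comm]
    rw [← e2, ← Matrix.trace_add, ← e1, Matrix.trace_sub]
  have key : |(K * H * L * H).trace - (tK * H * tL * H).trace| ≤ 8 * m - 4 := by
    rw [decomp]
    calc |_ + _| ≤ _ + _ := abs_add_le _ _
      _ ≤ 8 * (m:ℝ) - 4 := by linarith
  calc |hsicScore K L - hsicScore tK tL|
      = |(K * H * L * H).trace - (tK * H * tL * H).trace| / ((m : ℝ) - 1) ^ 2 := by
        rw [hsicScore, hsicScore, div_sub_div_same, abs_div, abs_of_pos hpos]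
    _ ≤ (8 * (m:ℝ) - 4) / ((m : ℝ) - 1) ^ 2 := by gcongr
    _ ≤ (12 * (m : ℝ) - 11) / ((m : ℝ) - 1) ^ 2 := by gcongr ?_ / _; linarith
end
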